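/- arXiv:0904.1264 — 9 statements merged into one kernel-verified Lean document; each statement's English description precedes it below -/
import Mathlib

section
/- Let Y be a connected, locally connected, locally compact separable metrizable space, μ a Radon measure on Y, and h a μ-preserving homeomorphism of Y fixing all ends, with vanishing end charge c^μ(h) = 0. Let C be a Borel subset of Y with compact frontier. If L is a Borel subset of C ∩ h(C) such that C − L is relatively compact in Y, then h(C) − L is also relatively compact and μ(h(C) − L) = μ(C − L). -/
open MeasureTheory

/-- Splitting lemma for homeomorphisms in the kernel of the end charge homomorphism:
if `h` is a `μ`-preserving homeomorphism with vanishing end charge (expressed by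
`μ(C \ h(C)) = μ(h(C) \ C)` for every Borel set with compact frontier, whose
symmetric difference with its image is relatively compact), `C` is Borel with compact
frontier, and `L ⊆ C ∩ h(C)` is Borel with `C \ L` relatively compact, then
`h(C) \ L` is relatively compact and `μ(h(C) \ L) = μ(C \ L)`. -/
theorem ker_end_charge_splitting
    {Y : Type*} [TopologicalSpace Y] [MeasurableSpace Y] [BorelSpace Y]
    [ConnectedSpace Y] [LocallyConnectedSpace Y] [LocallyCompactSpace Y]
    [TopologicalSpace.SeparableSpace Y] [TopologicalSpace.MetrizableSpace Y]
    [NoncompactSpace Y]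
    (μ : Measure Y) [IsFiniteMeasureOnCompacts μ]
    (h : Y ≃ₜ Y) (hpres : Measure.map h μ = μ)
    (hend : ∀ C : Set Y, MeasurableSet C → IsCompact (frontier C) →
      IsCompact (closure (symmDiff C (h '' C))))
    (hker : ∀ C : Set Y, MeasurableSet C → IsCompact (frontier C) →
      μ (C \ h '' C) = μ (h '' C \ C))
    (C : Set Y) (hC : MeasurableSet C) (hfrC : IsCompact (frontier C))
    (L : Set Y) (hL : MeasurableSet L) (hLsub : L ⊆ C ∩ h '' C)
    (hrel : IsCompact (closure (C \ L))) :
    IsCompact (closure (h '' C \ L)) ∧ μ (h '' C \ L) = μ (C \ L) := by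
  have hhC : MeasurableSet (h '' C) :=
    (Homeomorph.measurableEmbedding h).measurableSet_image.2 hC
  have hcomp := hend C hC hfrC
  have e1 : h '' C \ L = (h '' C \ C) ∪ ((C ∩ h '' C) \ L) := by
    ext x
    constructor
    · rintro ⟨hx1, hx2⟩
      by_cases hxC : x ∈ C
      · exact Or.inr ⟨⟨hxC, hx1⟩, hx2⟩
      · exact Or.inl ⟨hx1, hxC⟩
    · rintro (⟨hx1, hx2⟩ | ⟨⟨hx1, hx2⟩, hx3⟩)
      · exact ⟨hx1, fun hxL => hx2 (hLsub hxL).1⟩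
      · exact ⟨hx2, hx3⟩
  have e2 : C \ L = (C \ h '' C) ∪ ((C ∩ h '' C) \ L) := by
    ext x
    constructor
    · rintro ⟨hx1, hx2⟩
      by_cases hxh : x ∈ h '' C
      · exact Or.inr ⟨⟨hx1, hxh⟩, hx2⟩
      · exact Or.inl ⟨hx1, hxh⟩
    · rintro (⟨hx1, hx2⟩ | ⟨⟨hx1, hx2⟩, hx3⟩)
      · exact ⟨hx1, fun hxL => hx2 (hLsub hxL).2⟩
      · exact ⟨hx1, hx3⟩
  constructor
  · have hsub : h '' C \ L ⊆ symmDiff C (h '' C) ∪ (C \ L) := by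
      intro x hx
      by_cases hxC : x ∈ C
      · exact Or.inr ⟨hxC, hx.2⟩
      · exact Or.inl (Set.mem_symmDiff.2 (Or.inr ⟨hx.1, hxC⟩))
    refine IsCompact.of_isClosed_subset (hcomp.union hrel) isClosed_closure ?_
    calc closure (h '' C \ L) ⊆ closure (symmDiff C (h '' C) ∪ (C \ L)) :=
          closure_mono hsub
      _ = closure (symmDiff C (h '' C)) ∪ closure (C \ L) := closure_union
  · have hd1 : Disjoint (h '' C \ C) ((C ∩ h '' C) \ L) := by
      rw [Set.disjoint_left]
      rintro x ⟨_, hx2⟩ ⟨⟨hx3, _⟩, _⟩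
      exact hx2 hx3
    have hd2 : Disjoint (C \ h '' C) ((C ∩ h '' C) \ L) := by
      rw [Set.disjoint_left]
      rintro x ⟨_, hx2⟩ ⟨⟨_, hx3⟩, _⟩
      exact hx2 hx3
    have hm : MeasurableSet ((C ∩ h '' C) \ L) := (hC.inter hhC).diff hL
    rw [e1, e2, measure_union hd1 hm, measure_union hd2 hm, hker C hC hfrC]
end

section
/- Let Y be as above with Radon measure μ, and let h be a μ-preserving homeomorphism of Y fixing the ends. For C, D Borel subsets of Y with compact frontier, if the symmetric difference C Δ D is relatively compact, then μ(C − h(C)) − μ(h(C) − C) = μ(D − h(D)) − μ(h(D) − D); i.e., the end-charge value is independent of the representative with the same associated set of ends. -/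
open MeasureTheory

lemma tri_measure_aux {α : Type*} [MeasurableSpace α] (μ : Measure α) {E F G : Set α}
    (hE : MeasurableSet E) (hF : MeasurableSet F) (hG : MeasurableSet G) :
    μ (E \ F) + μ (F \ G) + μ (G \ E) = μ (F \ E) + μ (G \ F) + μ (E \ G) := by
  have s1 : (E \ F) ∩ G = (G \ F) ∩ E := by ext x; simp only [Set.mem_inter_iff, Set.mem_diff]; tauto
  have s2 : (E \ F) \ G = (E \ G) \ F := by ext x; simp only [Set.mem_diff]; tauto
  have s3 : (F \ G) ∩ E = (E \ G) ∩ F := by ext x; simp only [Set.mem_inter_iff, Set.mem_diff]; tauto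
  have s4 : (F \ G) \ E = (F \ E) \ G := by ext x; simp only [Set.mem_diff]; tauto
  have s5 : (G \ E) ∩ F = (F \ E) ∩ G := by ext x; simp only [Set.mem_inter_iff, Set.mem_diff]; tauto
  have s6 : (G \ E) \ F = (G \ F) \ E := by ext x; simp only [Set.mem_diff]; tauto
  rw [← measure_inter_add_diff (E \ F) hG, ← measure_inter_add_diff (F \ G) hE,
      ← measure_inter_add_diff (G \ E) hF, ← measure_inter_add_diff (F \ E) hG,
      ← measure_inter_add_diff (G \ F) hE, ← measure_inter_add_diff (E \ G) hF,
      s1, s2, s3, s4, s5, s6]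
  ring

lemma d_cocycle_aux {α : Type*} [MeasurableSpace α] (μ : Measure α) {E F G : Set α}
    (hE : MeasurableSet E) (hF : MeasurableSet F) (hG : MeasurableSet G)
    (h1 : μ (E \ F) ≠ ⊤) (h2 : μ (F \ E) ≠ ⊤) (h3 : μ (F \ G) ≠ ⊤) (h4 : μ (G \ F) ≠ ⊤) :
    (μ (E \ G)).toReal - (μ (G \ E)).toReal
      = ((μ (E \ F)).toReal - (μ (F \ E)).toReal)
        + ((μ (F \ G)).toReal - (μ (G \ F)).toReal) := by
  have sub1 : E \ G ⊆ (E \ F) ∪ (F \ G) := by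
    intro x hx; simp only [Set.mem_union, Set.mem_diff] at *; tauto
  have sub2 : G \ E ⊆ (G \ F) ∪ (F \ E) := by
    intro x hx; simp only [Set.mem_union, Set.mem_diff] at *; tauto
  have hEG : μ (E \ G) ≠ ⊤ :=
    (((measure_mono sub1).trans (measure_union_le _ _)).trans_lt
      (ENNReal.add_lt_top.2 ⟨h1.lt_top, h3.lt_top⟩)).ne
  have hGE : μ (G \ E) ≠ ⊤ :=
    (((measure_mono sub2).trans (measure_union_le _ _)).trans_lt
      (ENNReal.add_lt_top.2 ⟨h4.lt_top, h2.lt_top⟩)).ne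
  have key := congrArg ENNReal.toReal (tri_measure_aux μ hE hF hG)
  rw [ENNReal.toReal_add (ENNReal.add_ne_top.2 ⟨h1, h3⟩) hGE,
      ENNReal.toReal_add h1 h3,
      ENNReal.toReal_add (ENNReal.add_ne_top.2 ⟨h2, h4⟩) hEG,
      ENNReal.toReal_add h2 h4] at key
  linarith

/-- Well-definedness of the end charge: for a `μ`-preserving homeomorphism `h`
fixing the ends (so that `C Δ h(C)` is relatively compact for every Borel set with
compact frontier), and Borel sets `C`, `D` with compact frontier whose symmetric
difference is relatively compact, the end-charge values computed from `C` and from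
`D` coincide. -/
theorem end_charge_well_defined
    {Y : Type*} [TopologicalSpace Y] [MeasurableSpace Y] [BorelSpace Y]
    [ConnectedSpace Y] [LocallyConnectedSpace Y] [LocallyCompactSpace Y]
    [TopologicalSpace.SeparableSpace Y] [TopologicalSpace.MetrizableSpace Y]
    [NoncompactSpace Y]
    (μ : Measure Y) [IsFiniteMeasureOnCompacts μ]
    (h : Y ≃ₜ Y) (hpres : Measure.map h μ = μ)
    (hend : ∀ C : Set Y, MeasurableSet C → IsCompact (frontier C) →
      IsCompact (closure (symmDiff C (h '' C))))
    (C D : Set Y) (hC : MeasurableSet C) (hD : MeasurableSet D)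
    (hfrC : IsCompact (frontier C)) (hfrD : IsCompact (frontier D))
    (hCD : IsCompact (closure (symmDiff C D))) :
    (μ (C \ h '' C)).toReal - (μ (h '' C \ C)).toReal
      = (μ (D \ h '' D)).toReal - (μ (h '' D \ D)).toReal := by
  -- images of measurable sets are measurable
  have him : ∀ S : Set Y, MeasurableSet S → MeasurableSet (h '' S) := fun S hS =>
    h.toMeasurableEquiv.measurableSet_image.2 hS
  -- μ is invariant under images by h
  have hinv : ∀ S : Set Y, MeasurableSet S → μ (h '' S) = μ S := by
    intro S hS
    conv_lhs => rw [← hpres]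
    rw [Measure.map_apply h.measurable (him S hS),
      Set.preimage_image_eq _ h.injective]
  -- finiteness from relative compactness of symmetric differences
  have fin : ∀ A B : Set Y, IsCompact (closure (symmDiff A B)) →
      μ (A \ B) ≠ ⊤ ∧ μ (B \ A) ≠ ⊤ := by
    intro A B hk
    constructor
    · refine ((measure_mono fun x hx => subset_closure ?_).trans_lt hk.measure_lt_top).ne
      exact Set.mem_symmDiff.2 (Or.inl ⟨hx.1, hx.2⟩)
    · refine ((measure_mono fun x hx => subset_closure ?_).trans_lt hk.measure_lt_top).ne
      exact Set.mem_symmDiff.2 (Or.inr ⟨hx.1, hx.2⟩)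
  obtain ⟨f1, f2⟩ := fin C D hCD
  obtain ⟨f3, f4⟩ := fin C (h '' C) (hend C hC hfrC)
  obtain ⟨f5, f6⟩ := fin D (h '' D) (hend D hD hfrD)
  -- μ (D \ h '' C) and μ (h '' C \ D) are finite
  have f7 : μ (D \ h '' C) ≠ ⊤ := by
    have sub : D \ h '' C ⊆ (D \ C) ∪ (C \ h '' C) := by
      intro x hx; simp only [Set.mem_union, Set.mem_diff] at *; tauto
    exact (((measure_mono sub).trans (measure_union_le _ _)).trans_lt
      (ENNReal.add_lt_top.2 ⟨f2.lt_top, f3.lt_top⟩)).ne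
  have f8 : μ (h '' C \ D) ≠ ⊤ := by
    have sub : h '' C \ D ⊆ (h '' C \ C) ∪ (C \ D) := by
      intro x hx; simp only [Set.mem_union, Set.mem_diff] at *; tauto
    exact (((measure_mono sub).trans (measure_union_le _ _)).trans_lt
      (ENNReal.add_lt_top.2 ⟨f4.lt_top, f1.lt_top⟩)).ne
  -- images: μ (h '' C \ h '' D) = μ (C \ D), μ (h '' D \ h '' C) = μ (D \ C)
  have im1 : μ (h '' C \ h '' D) = μ (C \ D) := by
    rw [← Set.image_diff h.injective, hinv _ (hC.diff hD)]
  have im2 : μ (h '' D \ h '' C) = μ (D \ C) := by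
    rw [← Set.image_diff h.injective, hinv _ (hD.diff hC)]
  have e1 := d_cocycle_aux μ hC hD (him C hC) f1 f2 f7 f8
  have e2 := d_cocycle_aux μ hD (him C hC) (him D hD) f7 f8
    (by rw [im1]; exact f1) (by rw [im2]; exact f2)
  rw [im1, im2] at e2
  linarith
end

section
/- Suppose a topological group G acts transitively on topological spaces B and B₁, p : B₁ → B is a G-equivariant continuous map, b₁ ∈ B₁, b = p(b₁), and π : G → B is the orbit map π(g) = g·b. Form the pullback p*G = {(x, g) ∈ B₁ × G : p(x) = π(g)}. If there exists a neighborhood U₁ of b₁ in B₁ and a continuous map s₁ : U₁ → G with π ∘ s₁ = p|U₁ (a local section property at b₁), then the projection π' : p*G → B₁, π'(x,g) = x, is a principal G_b-bundle, where G_b is the stabilizer of b. -/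
open scoped Pointwise
open Topology MulAction

/-!
A continuous local section `σ` of `g ↦ g • b` along `p` over `U` trivializes the pullback
over `U`: `(u, k) ↦ (u, σ u * k)` is a homeomorphism onto the part of `p*G` over `U`, with
inverse `(u, g) ↦ (u, (σ u)⁻¹ * g)`, and it commutes with right multiplication by `G_b`.
Such a section exists near every point: translating the given section at `b₁` by `g`,
`u ↦ g * s₁ (g⁻¹ • u)` is a local section over `g • U₁`, and by transitivity every point of
`B₁` lies in some `g • interior U₁`.
-/

namespace PullbackBundle

variable {G B B₁ : Type*} [Group G] [TopologicalSpace G] [TopologicalSpace B₁] [MulAction G B]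

def IsLocalSection (p : B₁ → B) (b : B) (U : Set B₁) (s : B₁ → G) : Prop :=
  ContinuousOn s U ∧ ∀ x ∈ U, s x • b = p x

variable {p : B₁ → B} {b : B} {U : Set B₁} {s : B₁ → G}

namespace IsLocalSection

theorem mono {V : Set B₁} (hs : IsLocalSection p b U s) (hVU : V ⊆ U) :
    IsLocalSection p b V s :=
  ⟨hs.1.mono hVU, fun x hx => hs.2 x (hVU hx)⟩

theorem smul_mem_pullback (hs : IsLocalSection p b U s) (u : U) (k : stabilizer G b) :
    ((u : B₁), s u * k) ∈ {z : B₁ × G | p z.1 = z.2 • b ∧ z.1 ∈ U} :=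
  ⟨by rw [mul_smul, mem_stabilizer_iff.1 k.2, hs.2 u u.2], u.2⟩

theorem inv_mul_mem_stabilizer (hs : IsLocalSection p b U s)
    (z : {z : B₁ × G | p z.1 = z.2 • b ∧ z.1 ∈ U}) :
    (s (z : B₁ × G).1)⁻¹ * (z : B₁ × G).2 ∈ stabilizer G b := by
  rw [mem_stabilizer_iff, mul_smul, ← z.2.1, ← hs.2 _ z.2.2, inv_smul_smul]

variable [IsTopologicalGroup G]

def trivialization (hs : IsLocalSection p b U s) :
    (U × stabilizer G b) ≃ₜ {z : B₁ × G | p z.1 = z.2 • b ∧ z.1 ∈ U} where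
  toFun w := ⟨(w.1, s w.1 * w.2), hs.smul_mem_pullback w.1 w.2⟩
  invFun z := (⟨(z : B₁ × G).1, z.2.2⟩, ⟨_, hs.inv_mul_mem_stabilizer z⟩)
  left_inv w := by simp
  right_inv z := by simp
  continuous_toFun := by
    have hsU : Continuous fun u : U => s u := hs.1.domRestrict
    exact ((continuous_subtype_val.comp continuous_fst).prodMk
      ((hsU.comp continuous_fst).mul (continuous_subtype_val.comp continuous_snd))).subtype_mk _
  continuous_invFun := by
    have hsZ : Continuous fun z : {z : B₁ × G | p z.1 = z.2 • b ∧ z.1 ∈ U} => s (z : B₁ × G).1 :=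
      hs.1.comp_continuous (by fun_prop) fun z => z.2.2
    exact ((continuous_fst.comp continuous_subtype_val).subtype_mk _).prodMk
      ((hsZ.inv.mul (continuous_snd.comp continuous_subtype_val)).subtype_mk _)

@[simp]
theorem trivialization_apply (hs : IsLocalSection p b U s) (w : U × stabilizer G b) :
    (hs.trivialization w : B₁ × G) = ((w.1 : B₁), s w.1 * w.2) :=
  rfl

variable [MulAction G B₁] [ContinuousSMul G B₁]

theorem translate (heq : ∀ (g : G) (x : B₁), p (g • x) = g • p x)
    (hs : IsLocalSection p b U s) (g : G) :
    IsLocalSection p b (g • U) (fun u => g * s (g⁻¹ • u)) := by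
  have hmaps : Set.MapsTo (g⁻¹ • ·) (g • U) U := fun u hu =>
    Set.mem_smul_set_iff_inv_smul_mem.1 hu
  refine ⟨continuousOn_const.mul (hs.1.comp (continuous_const_smul _).continuousOn hmaps),
    fun u hu => ?_⟩
  calc (g * s (g⁻¹ • u)) • b = g • p (g⁻¹ • u) := by rw [mul_smul, hs.2 _ (hmaps hu)]
    _ = p u := by rw [← heq, smul_inv_smul]

end IsLocalSection

theorem exists_isLocalSection_of_mem_nhds [IsTopologicalGroup G] [MulAction G B₁]
    [ContinuousSMul G B₁] (htrans : ∀ x y : B₁, ∃ g : G, g • x = y)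
    (heq : ∀ (g : G) (x : B₁), p (g • x) = g • p x)
    {b₁ : B₁} (hU : U ∈ 𝓝 b₁) (hs : IsLocalSection p b U s) (x : B₁) :
    ∃ V : Set B₁, IsOpen V ∧ x ∈ V ∧ ∃ σ : B₁ → G, IsLocalSection p b V σ := by
  obtain ⟨g, rfl⟩ := htrans b₁ x
  exact ⟨g • interior U, isOpen_interior.smul g,
    Set.smul_mem_smul_set (mem_interior_iff_mem_nhds.2 hU), _,
    (hs.mono interior_subset).translate heq g⟩

end PullbackBundle

open PullbackBundle in
theorem pullback_is_principal_bundle_of_local_section_general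
    {G B B₁ : Type*} [Group G] [TopologicalSpace G] [IsTopologicalGroup G]
    [TopologicalSpace B₁]
    [MulAction G B] [MulAction G B₁] [ContinuousSMul G B₁]
    (htransB₁ : ∀ x y : B₁, ∃ g : G, g • x = y)
    (p : B₁ → B)
    (heq : ∀ (g : G) (x : B₁), p (g • x) = g • p x)
    (b₁ : B₁)
    (hsec : ∃ U₁ ∈ nhds b₁, ∃ s₁ : B₁ → G, ContinuousOn s₁ U₁ ∧
      ∀ x ∈ U₁, s₁ x • p b₁ = p x) :
    ∀ x : B₁, ∃ U : Set B₁, IsOpen U ∧ x ∈ U ∧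
      ∃ φ : (↥U × ↥(MulAction.stabilizer G (p b₁))) ≃ₜ
          ↥{z : B₁ × G | p z.1 = z.2 • p b₁ ∧ z.1 ∈ U},
        (∀ w, ((φ w : B₁ × G)).1 = (w.1 : B₁)) ∧
        (∀ (w : ↥U × ↥(MulAction.stabilizer G (p b₁)))
            (k : ↥(MulAction.stabilizer G (p b₁))),
          (φ (w.1, w.2 * k) : B₁ × G)
            = ((φ w : B₁ × G).1, (φ w : B₁ × G).2 * (k : G))) := by
  obtain ⟨U₁, hU₁, s₁, hs₁⟩ := hsec
  intro x
  obtain ⟨U, hU, hxU, σ, hσ⟩ := exists_isLocalSection_of_mem_nhds htransB₁ heq hU₁ hs₁ x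
  refine ⟨U, hU, hxU, hσ.trivialization, fun w => rfl, fun w k => ?_⟩
  simp [mul_assoc]

/-- If a `G`-equivariant map `p : B₁ → B` between transitive `G`-spaces has a local
section at `b₁`, then the pullback projection `π' : p*G → B₁` is a principal
`G_b`-bundle (it admits compatible local trivializations over a neighborhood of
every point). -/
theorem pullback_is_principal_bundle_of_local_section
    {G B B₁ : Type*} [Group G] [TopologicalSpace G] [IsTopologicalGroup G]
    [TopologicalSpace B] [TopologicalSpace B₁]
    [MulAction G B] [MulAction G B₁] [ContinuousSMul G B] [ContinuousSMul G B₁]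
    (htransB : ∀ x y : B, ∃ g : G, g • x = y)
    (htransB₁ : ∀ x y : B₁, ∃ g : G, g • x = y)
    (p : B₁ → B) (hp : Continuous p)
    (heq : ∀ (g : G) (x : B₁), p (g • x) = g • p x)
    (b₁ : B₁)
    (hsec : ∃ U₁ ∈ nhds b₁, ∃ s₁ : B₁ → G, ContinuousOn s₁ U₁ ∧
      ∀ x ∈ U₁, s₁ x • p b₁ = p x) :
    ∀ x : B₁, ∃ U : Set B₁, IsOpen U ∧ x ∈ U ∧
      ∃ φ : (↥U × ↥(MulAction.stabilizer G (p b₁))) ≃ₜ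
          ↥{z : B₁ × G | p z.1 = z.2 • p b₁ ∧ z.1 ∈ U},
        (∀ w, ((φ w : B₁ × G)).1 = (w.1 : B₁)) ∧
        (∀ (w : ↥U × ↥(MulAction.stabilizer G (p b₁)))
            (k : ↥(MulAction.stabilizer G (p b₁))),
          (φ (w.1, w.2 * k) : B₁ × G)
            = ((φ w : B₁ × G).1, (φ w : B₁ × G).2 * (k : G))) :=
  pullback_is_principal_bundle_of_local_section_general htransB₁ p heq b₁ hsec
end

section
/- Suppose a topological group G acts continuously on a space Y, U and C are subsets of Y with C ⊆ U, and there exists a path h : [0,1] → G with h₀ = identity, h₁(U) ⊆ C, and h_t(U) ⊆ U, h_t(C) ⊆ C for all t. Then the restriction map p : ℰ^G(U,Y) → ℰ^G(C,Y), p(f) = f|_C, between the orbit spaces of embeddings (restrictions to U resp. C of elements of G, with the compact-open topology) is a homotopy equivalence, with homotopy inverse p₁(f) = f ∘ (h₁|_U). -/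
/-!
Precomposing with `h_t` moves an element `ĝ|_A` of `ℰ^G(A, Y)` to `(g h_t)|_A`, so `t ↦ f ∘ h_t`
is a homotopy inside `ℰ^G(A, Y)` from the identity to precomposition with `h₁`; on `U` and on `C`
the latter is `p₁ ∘ p` and `p ∘ p₁` respectively. The homotopy is jointly continuous by a tube
lemma argument over compact neighbourhoods in the parameter interval.
-/

open Set Topology unitInterval

namespace ContinuousMap

theorem continuous_comp_curry {Z X W Y : Type*} [TopologicalSpace Z] [TopologicalSpace X]
    [TopologicalSpace W] [TopologicalSpace Y] [LocallyCompactSpace Z] (S : C(Z × X, W)) :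
    Continuous fun p : Z × C(W, Y) => p.2.comp (S.curry p.1) := by
  rw [continuous_compactOpen]
  intro K hK V hV
  rw [isOpen_iff_mem_nhds]
  rintro ⟨z, f⟩ hzf
  have hnear : ∀ᶠ z' in 𝓝 z, MapsTo (S.curry z') K (f ⁻¹' V) :=
    (S.curry.continuous.tendsto z).eventually
      (eventually_mapsTo hK (hV.preimage f.continuous) hzf)
  obtain ⟨N, hN, hNnear, hNc⟩ := local_compact_nhds hnear
  have hL : IsCompact (S '' N ×ˢ K) := (hNc.prod hK).image S.continuous
  have hfL : MapsTo f (S '' N ×ˢ K) V := by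
    rintro _ ⟨⟨z', x⟩, ⟨hz', hx⟩, rfl⟩
    exact hNnear hz' hx
  filter_upwards [prod_mem_nhds hN (eventually_mapsTo hL hV hfL)]
  rintro ⟨z', g⟩ ⟨hz', hg⟩ x hx
  exact hg ⟨(z', x), ⟨hz', hx⟩, rfl⟩

end ContinuousMap

/-- The paper's `ℰ^G(A, Y)`. -/
abbrev ActionRestrictions (G : Type*) {Y : Type*} [Monoid G] [TopologicalSpace Y]
    [MulAction G Y] (A : Set Y) :=
  {f : C(A, Y) // ∃ g : G, ∀ x : A, f x = g • (x : Y)}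

namespace ActionRestrictions

variable {G Y : Type*} [Monoid G] [TopologicalSpace Y] [MulAction G Y] {A B : Set Y}

def restrict (hAB : A ⊆ B) : C(ActionRestrictions G B, ActionRestrictions G A) where
  toFun f := ⟨f.1.comp ⟨inclusion hAB, continuous_inclusion hAB⟩,
    let ⟨g, hg⟩ := f.2; ⟨g, fun _ => hg _⟩⟩
  continuous_toFun :=
    ((ContinuousMap.continuous_precomp _).comp continuous_subtype_val).subtype_mk _

def precomp [ContinuousConstSMul G Y] (k : G) (hk : ∀ x ∈ A, k • x ∈ B) :
    C(ActionRestrictions G B, ActionRestrictions G A) where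
  toFun f := ⟨f.1.comp ⟨fun x => ⟨k • (x : Y), hk x x.2⟩, by fun_prop⟩,
    let ⟨g, hg⟩ := f.2; ⟨g * k, fun x => by simp [hg, mul_smul]⟩⟩
  continuous_toFun :=
    ((ContinuousMap.continuous_precomp _).comp continuous_subtype_val).subtype_mk _

@[simp]
theorem precomp_apply_apply [ContinuousConstSMul G Y] (k : G) (hk : ∀ x ∈ A, k • x ∈ B)
    (f : ActionRestrictions G B) (x : A) :
    (precomp k hk f).1 x = f.1 ⟨k • (x : Y), hk x x.2⟩ :=
  rfl

variable [TopologicalSpace G] [ContinuousSMul G Y]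

theorem homotopic_precomp (h : C(I, G)) (hAB : ∀ t, ∀ x ∈ A, h t • x ∈ B) :
    (precomp (h 0) (hAB 0)).Homotopic (precomp (h 1) (hAB 1)) := by
  let S : C(I × A, B) := ⟨fun p => ⟨h p.1 • (p.2 : Y), hAB p.1 p.2 p.2.2⟩, by fun_prop⟩
  refine ⟨{ toFun := fun p => precomp (h p.1) (hAB p.1) p.2,
             continuous_toFun := ?_,
             map_zero_left := fun _ => rfl,
             map_one_left := fun _ => rfl }⟩
  exact ((ContinuousMap.continuous_comp_curry S).comp
    (continuous_fst.prodMk (continuous_subtype_val.comp continuous_snd))).subtype_mk _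

theorem homotopic_id_precomp (h : C(I, G)) (h0 : h 0 = 1) (hA : ∀ t, ∀ x ∈ A, h t • x ∈ A) :
    (ContinuousMap.id (ActionRestrictions G A)).Homotopic (precomp (h 1) (hA 1)) := by
  convert homotopic_precomp h hA
  ext f x
  simp [h0]

end ActionRestrictions

open ActionRestrictions in
theorem restriction_map_homotopy_equivalence_general
    {G Y : Type*} [Group G] [TopologicalSpace G]
    [TopologicalSpace Y]
    [MulAction G Y] [ContinuousSMul G Y]
    (U C : Set Y) (hCU : C ⊆ U)
    (h : C(I, G)) (h0 : h 0 = 1)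
    (h1U : ∀ x ∈ U, (h 1) • x ∈ C)
    (htU : ∀ (t : I), ∀ x ∈ U, (h t) • x ∈ U)
    (htC : ∀ (t : I), ∀ x ∈ C, (h t) • x ∈ C) :
    ∃ e : ContinuousMap.HomotopyEquiv
        {f : C(↥U, Y) // ∃ g : G, ∀ x : ↥U, f x = g • (x : Y)}
        {f : C(↥C, Y) // ∃ g : G, ∀ x : ↥C, f x = g • (x : Y)},
      (∀ f (x : ↥C), ((e.toFun f : {f : C(↥C, Y) // ∃ g : G, ∀ x : ↥C, f x = g • (x : Y)}) :
          C(↥C, Y)) x = (f : C(↥U, Y)) ⟨(x : Y), hCU x.2⟩) ∧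
      (∀ f (x : ↥U), ((e.invFun f : {f : C(↥U, Y) // ∃ g : G, ∀ x : ↥U, f x = g • (x : Y)}) :
          C(↥U, Y)) x = (f : C(↥C, Y)) ⟨(h 1) • (x : Y), h1U x.1 x.2⟩) :=
  ⟨⟨restrict hCU, precomp (h 1) h1U, (homotopic_id_precomp h h0 htU).symm,
    (homotopic_id_precomp h h0 htC).symm⟩, fun _ _ => rfl, fun _ _ => rfl⟩

/-- If there is a path `h_t` in `G` with `h₀ = e`, `h₁(U) ⊆ C`, `h_t(U) ⊆ U` and
`h_t(C) ⊆ C`, then the restriction map `ℰ^G(U,Y) → ℰ^G(C,Y)`, `f ↦ f|_C`, is a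
homotopy equivalence, with homotopy inverse `f ↦ f ∘ h₁|_U`. -/
theorem restriction_map_homotopy_equivalence
    {G Y : Type*} [Group G] [TopologicalSpace G] [IsTopologicalGroup G]
    [TopologicalSpace Y] [LocallyCompactSpace Y] [T2Space Y]
    [MulAction G Y] [ContinuousSMul G Y]
    (U C : Set Y) (hCU : C ⊆ U)
    (h : C(I, G)) (h0 : h 0 = 1)
    (h1U : ∀ x ∈ U, (h 1) • x ∈ C)
    (htU : ∀ (t : I), ∀ x ∈ U, (h t) • x ∈ U)
    (htC : ∀ (t : I), ∀ x ∈ C, (h t) • x ∈ C) :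
    ∃ e : ContinuousMap.HomotopyEquiv
        {f : C(↥U, Y) // ∃ g : G, ∀ x : ↥U, f x = g • (x : Y)}
        {f : C(↥C, Y) // ∃ g : G, ∀ x : ↥C, f x = g • (x : Y)},
      (∀ f (x : ↥C), ((e.toFun f : {f : C(↥C, Y) // ∃ g : G, ∀ x : ↥C, f x = g • (x : Y)}) :
          C(↥C, Y)) x = (f : C(↥U, Y)) ⟨(x : Y), hCU x.2⟩) ∧
      (∀ f (x : ↥U), ((e.invFun f : {f : C(↥U, Y) // ∃ g : G, ∀ x : ↥U, f x = g • (x : Y)}) :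
          C(↥U, Y)) x = (f : C(↥C, Y)) ⟨(h 1) • (x : Y), h1U x.1 x.2⟩) :=
  restriction_map_homotopy_equivalence_general U C hCU h h0 h1U htU htC
end

section
/- Under the same hypotheses (a path h_t in G with h₀ = e, h₁(U) ⊆ C, h_t(U) ⊆ U, h_t(C) ⊆ C), the space ℰ_C^G(U,Y) of restrictions to U of elements of G that fix C pointwise admits a strong deformation retraction onto the singleton {i_U} (the inclusion map of U), given by χ_t(f) = ĥ_t⁻¹ ∘ f ∘ ĥ_t|_U. -/
open unitInterval

/-!
Conjugating `f = ĝ|_U` by `h_t` gives the restriction of `h_t⁻¹ g h_t`, which still fixes `C`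
because `h_t(C) ⊆ C`; at `t = 0` this is `f`, at `t = 1` it is the inclusion because
`h_1(U) ⊆ C`, and the inclusion itself is never moved. Evaluation on `C(U, Y)` need not be
continuous since `U` need not be locally compact, so continuity in `(t, f)` comes instead from a
tube-lemma argument with compact neighbourhoods in the parameter interval.
-/

namespace ContinuousMap

variable {T X Y : Type*} [TopologicalSpace T] [TopologicalSpace X] [TopologicalSpace Y]

theorem continuous_curry_apply [LocallyCompactSpace T] :
    Continuous fun p : T × C(T × X, Y) => p.2.curry p.1 := by
  simp_rw [continuous_iff_continuousAt, ContinuousAt, tendsto_nhds_compactOpen]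
  rintro ⟨t₀, F₀⟩ K hK V hV hKV
  obtain ⟨A, B, hA, -, ht₀A, hKB, hAB⟩ := generalized_tube_lemma isCompact_singleton hK
    (hV.preimage F₀.continuous) (by rintro ⟨t, x⟩ ⟨rfl, hx⟩; exact hKV hx)
  obtain ⟨N, hN, hNA, hNc⟩ := local_compact_nhds (hA.mem_nhds (ht₀A rfl))
  have hF₀ : Set.MapsTo F₀ (N ×ˢ K) V := fun q hq => hAB ⟨hNA hq.1, hKB hq.2⟩
  filter_upwards [prod_mem_nhds hN (eventually_mapsTo (hNc.prod hK) hV hF₀)]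
    with ⟨t, F⟩ ⟨ht, hF⟩ x hx using hF ⟨ht, hx⟩

end ContinuousMap

section Conjugation

variable {G Y T : Type*} [Group G] [TopologicalSpace G]
  [TopologicalSpace Y] [MulAction G Y] [ContinuousSMul G Y] [TopologicalSpace T]
  {U : Set Y} (h : C(T, G)) (hU : ∀ t, ∀ x ∈ U, h t • x ∈ U)

def pathActionOn : C(T × U, U) :=
  ⟨fun p => ⟨h p.1 • (p.2 : Y), hU p.1 p.2 p.2.2⟩, by fun_prop⟩

def conjHomotopy (p : T × C(U, Y)) : C(U, Y) :=
  (h p.1)⁻¹ • (p.2.comp (pathActionOn h hU)).curry p.1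

theorem conjHomotopy_apply (t : T) (f : C(U, Y)) (x : U) :
    conjHomotopy h hU (t, f) x = (h t)⁻¹ • f ⟨h t • (x : Y), hU t x x.2⟩ :=
  rfl

theorem continuous_conjHomotopy [ContinuousInv G] [LocallyCompactSpace T] :
    Continuous (conjHomotopy h hU) :=
  (h.continuous.comp continuous_fst).inv.smul <| ContinuousMap.continuous_curry_apply.comp <|
    continuous_fst.prodMk <| (ContinuousMap.continuous_precomp _).comp continuous_snd

theorem conjHomotopy_eq_self_of_eq_one {t : T} (ht : h t = 1) (f : C(U, Y)) :
    conjHomotopy h hU (t, f) = f := by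
  ext x
  simp only [conjHomotopy_apply, ht, inv_one, one_smul]

theorem conjHomotopy_eq_self_of_forall_eq {f : C(U, Y)} (hf : ∀ x : U, f x = x) (t : T) :
    conjHomotopy h hU (t, f) = f := by
  ext x
  rw [conjHomotopy_apply, hf, hf, inv_smul_smul]

variable (G) in
def IsFixingRestriction (C : Set Y) (f : C(U, Y)) : Prop :=
  ∃ g : G, (∀ x : U, f x = g • (x : Y)) ∧ ∀ c ∈ C, g • c = c

variable {h hU} {C : Set Y} {f : C(U, Y)}

theorem IsFixingRestriction.conjHomotopy (hf : IsFixingRestriction G C f) {t : T}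
    (htC : ∀ x ∈ C, h t • x ∈ C) :
    IsFixingRestriction G C (_root_.conjHomotopy h hU (t, f)) := by
  obtain ⟨g, hfg, hgC⟩ := hf
  refine ⟨(h t)⁻¹ * g * h t, fun x => ?_, fun c hc => ?_⟩
  · rw [conjHomotopy_apply, hfg, mul_smul, mul_smul]
  · rw [mul_smul, mul_smul, hgC _ (htC c hc), inv_smul_smul]

theorem IsFixingRestriction.conjHomotopy_apply_eq_coe (hf : IsFixingRestriction G C f) {t : T}
    (htUC : ∀ x ∈ U, h t • x ∈ C) (x : U) : _root_.conjHomotopy h hU (t, f) x = x := by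
  obtain ⟨g, hfg, hgC⟩ := hf
  rw [conjHomotopy_apply, hfg, hgC _ (htUC x x.2), inv_smul_smul]

end Conjugation

theorem strong_deformation_retraction_onto_inclusion_general
    {G Y : Type*} [Group G] [TopologicalSpace G] [IsTopologicalGroup G]
    [TopologicalSpace Y]
    [MulAction G Y] [ContinuousSMul G Y]
    (U C : Set Y)
    (h : C(I, G)) (h0 : h 0 = 1)
    (h1U : ∀ x ∈ U, (h 1) • x ∈ C)
    (htU : ∀ (t : I), ∀ x ∈ U, (h t) • x ∈ U)
    (htC : ∀ (t : I), ∀ x ∈ C, (h t) • x ∈ C) :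
    ∃ H : I × {f : C(↥U, Y) // ∃ g : G, (∀ x : ↥U, f x = g • (x : Y)) ∧ ∀ c ∈ C, g • c = c} →
        {f : C(↥U, Y) // ∃ g : G, (∀ x : ↥U, f x = g • (x : Y)) ∧ ∀ c ∈ C, g • c = c},
      Continuous H ∧
      (∀ f, H (0, f) = f) ∧
      (∀ f (x : ↥U), (H (1, f)).1 x = (x : Y)) ∧
      (∀ (t : I) f, (∀ x : ↥U, f.1 x = (x : Y)) → H (t, f) = f) := by
  refine ⟨fun p => ⟨conjHomotopy h htU (p.1, p.2.1),
    IsFixingRestriction.conjHomotopy p.2.2 (htC p.1)⟩, ?_, ?_, ?_, ?_⟩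
  · exact ((continuous_conjHomotopy h htU).comp
      (continuous_fst.prodMk (continuous_subtype_val.comp continuous_snd))).subtype_mk _
  · exact fun f => Subtype.ext (conjHomotopy_eq_self_of_eq_one h htU h0 f.1)
  · exact fun f => IsFixingRestriction.conjHomotopy_apply_eq_coe f.2 h1U
  · exact fun t f hf => Subtype.ext (conjHomotopy_eq_self_of_forall_eq h htU hf t)

/-- Under the same path hypotheses, the space `ℰ_C^G(U,Y)` of restrictions to `U`
of elements of `G` fixing `C` pointwise admits a strong deformation retraction onto
the inclusion `i_U`. -/
theorem strong_deformation_retraction_onto_inclusion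
    {G Y : Type*} [Group G] [TopologicalSpace G] [IsTopologicalGroup G]
    [TopologicalSpace Y] [LocallyCompactSpace Y] [T2Space Y]
    [MulAction G Y] [ContinuousSMul G Y]
    (U C : Set Y) (hCU : C ⊆ U)
    (h : C(I, G)) (h0 : h 0 = 1)
    (h1U : ∀ x ∈ U, (h 1) • x ∈ C)
    (htU : ∀ (t : I), ∀ x ∈ U, (h t) • x ∈ U)
    (htC : ∀ (t : I), ∀ x ∈ C, (h t) • x ∈ C) :
    ∃ H : I × {f : C(↥U, Y) // ∃ g : G, (∀ x : ↥U, f x = g • (x : Y)) ∧ ∀ c ∈ C, g • c = c} →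
        {f : C(↥U, Y) // ∃ g : G, (∀ x : ↥U, f x = g • (x : Y)) ∧ ∀ c ∈ C, g • c = c},
      Continuous H ∧
      (∀ f, H (0, f) = f) ∧
      (∀ f (x : ↥U), (H (1, f)).1 x = (x : Y)) ∧
      (∀ (t : I) f, (∀ x : ↥U, f.1 x = (x : Y)) → H (t, f) = f) :=
  strong_deformation_retraction_onto_inclusion_general U C h h0 h1U htU htC
end

section
/- If pointed topological spaces (X_i, *_i), i ≥ 1, are each locally contractible (locally contractible at every point and strongly locally contractible at the basepoint), then the small box product ⊡_{i≥1}(X_i, *_i), i.e., the subspace of the box product consisting of sequences equal to the basepoint in all but finitely many coordinates with the distinguished point (*_i)_i, is locally contractible as a pointed space. -/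
open unitInterval

/-- `X` is locally contractible at `x`: every neighborhood `V` of `x` contains a
neighborhood `U` of `x` that contracts to `x` within `V`. -/
def LocContractibleAt (X : Type*) [TopologicalSpace X] (x : X) : Prop :=
  ∀ V ∈ nhds x, ∃ U ∈ nhds x, U ⊆ V ∧
    ∃ H : I × ↥U → X, Continuous H ∧
      (∀ u : ↥U, H (0, u) = (u : X)) ∧
      (∀ u : ↥U, H (1, u) = x) ∧
      (∀ (t : I) (u : ↥U), H (t, u) ∈ V)

/-- `X` is strongly locally contractible at `x`: additionally the contraction keeps
`x` fixed. -/
def StronglyLocContractibleAt (X : Type*) [TopologicalSpace X] (x : X) : Prop :=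
  ∀ V ∈ nhds x, ∃ U ∈ nhds x, U ⊆ V ∧
    ∃ H : I × ↥U → X, Continuous H ∧
      (∀ u : ↥U, H (0, u) = (u : X)) ∧
      (∀ u : ↥U, H (1, u) = x) ∧
      (∀ (t : I) (u : ↥U), H (t, u) ∈ V) ∧
      (∀ (t : I) (hx : x ∈ U), H (t, ⟨x, hx⟩) = x)

/-- The box topology on a countable product. -/
def boxTopology (X : ℕ → Type*) [∀ i, TopologicalSpace (X i)] :
    TopologicalSpace (∀ i, X i) :=
  TopologicalSpace.generateFrom
    {S | ∃ U : ∀ i, Set (X i), (∀ i, IsOpen (U i)) ∧ S = Set.univ.pi U}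

/-- The small box product: sequences equal to the basepoint in all but finitely
many coordinates. -/
def SmallBox (X : ℕ → Type*) (pt : ∀ i, X i) : Type _ :=
  {x : ∀ i, X i // {i | x i ≠ pt i}.Finite}

instance (X : ℕ → Type*) [∀ i, TopologicalSpace (X i)] (pt : ∀ i, X i) :
    TopologicalSpace (SmallBox X pt) :=
  TopologicalSpace.induced (fun x => x.1) (boxTopology X)

/-!
Contract a box neighbourhood coordinatewise, using at the cofinitely many coordinates where
`y i = pt i` a contraction that fixes `pt i`; the result stays in the small box. Continuity in
the box topology is the only issue: at a point `(t, u)`, all but finitely many coordinate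
homotopies are constant in time along `u i`, so compactness of `I` (the tube lemma) gives a
spatial neighbourhood there with no condition on the time, and only finitely many time
neighbourhoods have to be intersected.
-/

open Set Filter Topology TopologicalSpace

def IsLocalContraction {X : Type*} [TopologicalSpace X] {U : Set X} (H : I × U → X) (x : X)
    (V : Set X) : Prop :=
  Continuous H ∧ (∀ u : U, H (0, u) = u) ∧ (∀ u : U, H (1, u) = x) ∧ ∀ t u, H (t, u) ∈ V

theorem LocContractibleAt.exists_contraction_fixing {X : Type*} [TopologicalSpace X] {y p : X}
    (hy : LocContractibleAt X y) (hp : StronglyLocContractibleAt X p) {V : Set X}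
    (hV : V ∈ 𝓝 y) :
    ∃ U ∈ 𝓝 y, U ⊆ V ∧ ∃ H : I × U → X, IsLocalContraction H y V ∧
      (y = p → ∀ t (h : p ∈ U), H (t, ⟨p, h⟩) = p) := by
  rcases eq_or_ne y p with rfl | hne
  · obtain ⟨U, hU, hUV, H, hc, h0, h1, hin, hfix⟩ := hp V hV
    exact ⟨U, hU, hUV, H, ⟨hc, h0, h1, hin⟩, fun _ => hfix⟩
  · obtain ⟨U, hU, hUV, H, hH⟩ := hy V hV
    exact ⟨U, hU, hUV, H, hH, fun h => absurd h hne⟩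

def Box (X : ℕ → Type*) : Type _ := ∀ i, X i

namespace Box

variable {X : ℕ → Type*} [∀ i, TopologicalSpace (X i)]

instance : TopologicalSpace (Box X) := boxTopology X

theorem isTopologicalBasis :
    IsTopologicalBasis
      {S : Set (Box X) | ∃ U : ∀ i, Set (X i), (∀ i, IsOpen (U i)) ∧ S = univ.pi U} := by
  refine ⟨?_, ?_, rfl⟩
  · rintro _ ⟨U, hU, rfl⟩ _ ⟨W, hW, rfl⟩ x hx
    exact ⟨univ.pi fun i => U i ∩ W i, ⟨_, fun i => (hU i).inter (hW i), rfl⟩,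
      by rwa [pi_inter_distrib], pi_inter_distrib.subset⟩
  · exact sUnion_eq_univ_iff.2 fun x =>
      ⟨univ, ⟨fun _ => univ, fun _ => isOpen_univ, pi_univ _ |>.symm⟩, mem_univ x⟩

theorem nhds_basis (x : Box X) :
    (𝓝 x).HasBasis (fun W : ∀ i, Set (X i) => ∀ i, W i ∈ 𝓝 (x i))
      fun W => (univ.pi W : Set (Box X)) := by
  refine ⟨fun s => ⟨fun hs => ?_, fun ⟨W, hW, hWs⟩ => ?_⟩⟩
  · obtain ⟨_, ⟨W, hWo, rfl⟩, hxW, hWs⟩ := isTopologicalBasis.mem_nhds_iff.1 hs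
    exact ⟨W, fun i => (hWo i).mem_nhds (hxW i trivial), hWs⟩
  · choose O hOW hOo hxO using fun i => mem_nhds_iff.1 (hW i)
    exact mem_of_superset
      (isTopologicalBasis.isOpen ⟨O, hOo, rfl⟩ |>.mem_nhds fun i _ => hxO i)
      ((pi_mono fun i _ => hOW i).trans hWs)

theorem continuousAt_iff {A : Type*} [TopologicalSpace A] {f : A → Box X} {a : A} :
    ContinuousAt f a ↔
      ∀ W : ∀ i, Set (X i), (∀ i, W i ∈ 𝓝 (f a i)) → f ⁻¹' univ.pi W ∈ 𝓝 a :=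
  (nhds_basis (f a)).tendsto_right_iff

theorem continuous_subtype_mk {A : Type*} [TopologicalSpace A] {U : ∀ i, Set (X i)}
    {f : A → Box X} (hf : Continuous f) (hU : ∀ a i, f a i ∈ U i) :
    Continuous (Y := Box fun i => U i) fun a i => ⟨f a i, hU a i⟩ := by
  refine continuous_iff_continuousAt.2 fun a => continuousAt_iff.2 fun W hW => ?_
  choose O hO hOW using fun i => (mem_nhds_subtype _ _ _).1 (hW i)
  exact mem_of_superset (continuousAt_iff.1 hf.continuousAt O hO)
    fun b hb i _ => hOW i (hb i trivial)

theorem continuousAt_map_of_finite {T : Type*} [TopologicalSpace T] [CompactSpace T]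
    {Z : ℕ → Type*} [∀ i, TopologicalSpace (Z i)] {H : ∀ i, T × Z i → X i}
    (hH : ∀ i, Continuous (H i)) {t : T} {z : Box Z} {c : ∀ i, X i}
    (hz : {i | ∃ s, H i (s, z i) ≠ c i}.Finite) :
    ContinuousAt (Y := Box X) (fun p : T × Box Z => fun i => H i (p.1, p.2 i)) (t, z) := by
  refine continuousAt_iff.2 fun W hW => ?_
  set F := {i | ∃ s, H i (s, z i) ≠ c i}
  have tube : ∀ i, ∃ O ∈ 𝓝 t, ∃ N ∈ 𝓝 (z i), (i ∉ F → O = univ) ∧ O ×ˢ N ⊆ H i ⁻¹' W i := by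
    intro i
    by_cases hi : i ∈ F
    · obtain ⟨O, hO, N, hN, hON⟩ :=
        mem_nhds_prod_iff.1 ((hH i).continuousAt.preimage_mem_nhds (hW i))
      exact ⟨O, hO, N, hN, absurd hi, hON⟩
    · have hconst : ∀ s, H i (s, z i) = c i := by simpa [F] using hi
      have hN : ∀ᶠ w in 𝓝 (z i), ∀ s ∈ univ, H i (s, w) ∈ W i :=
        isCompact_univ.eventually_forall_of_forall_eventually fun s _ =>
          ((hH i).comp continuous_swap).continuousAt.preimage_mem_nhds
            (by simpa [hconst s, hconst t] using hW i)
      exact ⟨univ, univ_mem, _, hN, fun _ => rfl, fun p hp => hp.2 p.1 trivial⟩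
  choose O hO N hN hOuniv hON using tube
  refine mem_of_superset
    (prod_mem_nhds ((biInter_mem hz).2 fun i _ => hO i) ((nhds_basis z).mem_of_mem hN))
    fun p hp i _ => hON i ⟨?_, hp.2 i trivial⟩
  by_cases hi : i ∈ F
  · exact mem_iInter₂.1 hp.1 i hi
  · exact hOuniv i hi ▸ mem_univ _

end Box

namespace SmallBox

variable {X : ℕ → Type*} {pt : ∀ i, X i}

def base : SmallBox X pt := ⟨pt, by simp⟩

def toBox (x : SmallBox X pt) : Box X := x.1

def box (pt : ∀ i, X i) (U : ∀ i, Set (X i)) : Set (SmallBox X pt) := toBox ⁻¹' univ.pi U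

variable {Y : Type*} {U : ∀ i, Set (X i)} {H : ∀ i, Y × U i → X i}

theorem finite_exists_ne_of_fix
    (hH : ∀ᶠ i in cofinite, ∀ s (h : pt i ∈ U i), H i (s, ⟨pt i, h⟩) = pt i) (u : box pt U) :
    {i | ∃ s, H i (s, ⟨u.1.1 i, u.2 i trivial⟩) ≠ pt i}.Finite := by
  refine (u.1.2.union (eventually_cofinite.1 hH)).subset fun i ⟨s, hs⟩ => ?_
  by_contra hi
  simp only [mem_union, mem_ofPred_eq, not_or, not_not] at hi
  have hu : (⟨u.1.1 i, u.2 i trivial⟩ : U i) = ⟨pt i, hi.1 ▸ u.2 i trivial⟩ :=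
    Subtype.ext hi.1
  exact hs (hu ▸ hi.2 s _)

def homotopy (H : ∀ i, Y × U i → X i)
    (hH : ∀ᶠ i in cofinite, ∀ s (h : pt i ∈ U i), H i (s, ⟨pt i, h⟩) = pt i) :
    Y × box pt U → SmallBox X pt := fun p =>
  ⟨fun i => H i (p.1, ⟨p.2.1.1 i, p.2.2 i trivial⟩),
    (finite_exists_ne_of_fix hH p.2).subset fun _ hi => ⟨p.1, hi⟩⟩

variable [∀ i, TopologicalSpace (X i)] [TopologicalSpace Y]

theorem isInducing_toBox : IsInducing (toBox : SmallBox X pt → Box X) := ⟨rfl⟩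

theorem nhds_basis (y : SmallBox X pt) :
    (𝓝 y).HasBasis (fun W : ∀ i, Set (X i) => ∀ i, W i ∈ 𝓝 (y.1 i)) (box pt) :=
  isInducing_toBox.nhds_eq_comap y ▸ (Box.nhds_basis _).comap _

theorem continuous_homotopy [CompactSpace Y] (hHc : ∀ i, Continuous (H i))
    (hH : ∀ᶠ i in cofinite, ∀ s (h : pt i ∈ U i), H i (s, ⟨pt i, h⟩) = pt i) :
    Continuous (homotopy H hH) := by
  rw [isInducing_toBox.continuous_iff, continuous_iff_continuousAt]
  rintro ⟨t, u⟩
  have hg : Continuous (Y := Box fun i => U i)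
      fun u : box pt U => fun i => ⟨u.1.1 i, u.2 i trivial⟩ :=
    Box.continuous_subtype_mk (isInducing_toBox.continuous.comp continuous_subtype_val) _
  exact (Box.continuousAt_map_of_finite hHc (finite_exists_ne_of_fix hH u)).comp_of_eq
    (continuous_id.prodMap hg).continuousAt rfl

theorem exists_contraction (hloc : ∀ i, ∀ y : X i, LocContractibleAt (X i) y)
    (hstr : ∀ i, StronglyLocContractibleAt (X i) (pt i)) (y : SmallBox X pt)
    {V : Set (SmallBox X pt)} (hV : V ∈ 𝓝 y) :
    ∃ U ∈ 𝓝 y, U ⊆ V ∧ ∃ H : I × U → SmallBox X pt, IsLocalContraction H y V ∧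
      (y = base → ∀ t (h : base ∈ U), H (t, ⟨base, h⟩) = base) := by
  obtain ⟨W, hW, hWV⟩ := (nhds_basis y).mem_iff.1 hV
  choose U hU hUW H hH hfix using
    fun i => (hloc i (y.1 i)).exists_contraction_fixing (hstr i) (hW i)
  have hfix_pt : ∀ᶠ i in cofinite, ∀ t (h : pt i ∈ U i), H i (t, ⟨pt i, h⟩) = pt i :=
    y.2.eventually_cofinite_notMem.mono fun i hi => hfix i (not_not.1 hi)
  refine ⟨box pt U, (nhds_basis y).mem_of_mem hU,
    fun x hx => hWV fun i _ => hUW i (hx i trivial), homotopy H hfix_pt,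
    ⟨continuous_homotopy (fun i => (hH i).1) hfix_pt, fun u => ?_, fun u => ?_,
      fun t u => hWV fun i _ => (hH i).2.2.2 _ _⟩, ?_⟩
  · exact Subtype.ext (funext fun i => (hH i).2.1 _)
  · exact Subtype.ext (funext fun i => (hH i).2.2.1 _)
  · rintro rfl t h
    exact Subtype.ext (funext fun i => hfix i rfl t (h i trivial))

end SmallBox

/-- If each pointed space `(X_i, *_i)` is locally contractible (at every point, and
strongly at the basepoint), then the small box product is locally contractible as a
pointed space. -/
theorem smallBox_locally_contractible
    (X : ℕ → Type*) [∀ i, TopologicalSpace (X i)] (pt : ∀ i, X i)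
    (hloc : ∀ i, ∀ y : X i, LocContractibleAt (X i) y)
    (hstr : ∀ i, StronglyLocContractibleAt (X i) (pt i)) :
    (∀ y : SmallBox X pt, LocContractibleAt (SmallBox X pt) y) ∧
      StronglyLocContractibleAt (SmallBox X pt)
        ⟨pt, by simp⟩ := by
  refine ⟨fun y V hV => ?_, fun V hV => ?_⟩
  · obtain ⟨U, hU, hUV, H, hH, -⟩ := SmallBox.exists_contraction hloc hstr y hV
    exact ⟨U, hU, hUV, H, hH⟩
  · obtain ⟨U, hU, hUV, H, ⟨hc, h0, h1, hin⟩, hfix⟩ :=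
      SmallBox.exists_contraction hloc hstr SmallBox.base hV
    exact ⟨U, hU, hUV, H, hc, h0, h1, hin, hfix rfl⟩
end

section
/- Let M be a connected topological n-manifold and let L be an n-submanifold of M (a closed subset that is an n-manifold whose frontier is a locally flat (n−1)-manifold) such that the frontier ∂₊L = Fr_M L is compact. Then L has only finitely many connected components. -/
open Set

/-- A convex subset of a real normed space is locally connected. -/
lemma aux_convex_locallyConnected {E : Type*} [NormedAddCommGroup E] [NormedSpace ℝ E]
    {s : Set E} (hs : Convex ℝ s) : LocallyConnectedSpace s := by
  rw [locallyConnectedSpace_iff_connected_subsets]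
  rintro ⟨x, hx⟩ U hU
  rw [nhds_subtype_eq_comap, Filter.mem_comap] at hU
  obtain ⟨W, hW, hWU⟩ := hU
  obtain ⟨ε, hε, hball⟩ := Metric.mem_nhds_iff.mp hW
  refine ⟨Subtype.val ⁻¹' Metric.ball x ε, ?_, ?_, fun z hz => hWU (hball hz)⟩
  · rw [nhds_subtype_eq_comap]
    exact Filter.preimage_mem_comap (Metric.ball_mem_nhds x hε)
  · apply Topology.IsInducing.subtypeVal.isPreconnected_image.mp
    rw [Subtype.image_preimage_coe]
    exact (hs.inter (convex_ball x ε)).isPreconnected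

/-- In a connected topological `n`-manifold `M` (possibly with boundary), an
`n`-submanifold `L` (a closed subset that is itself an `n`-manifold and whose
frontier is a compact `(n-1)`-manifold) has only finitely many connected
components. -/
theorem finite_components_of_submanifold_with_compact_frontier
    (n : ℕ) [NeZero n]
    {M : Type*} [TopologicalSpace M] [T2Space M]
    [ChartedSpace (EuclideanHalfSpace n) M]
    [ConnectedSpace M] [SigmaCompactSpace M]
    (L : Set M) (hLclosed : IsClosed L)
    [ChartedSpace (EuclideanHalfSpace n) ↥L]
    [ChartedSpace (EuclideanSpace ℝ (Fin (n - 1))) ↥(frontier L)]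
    (hfr : IsCompact (frontier L)) :
    Finite (ConnectedComponents ↥L) := by
  -- `L` is locally connected, being a manifold modelled on the half-space.
  haveI : LocallyConnectedSpace (EuclideanHalfSpace n) :=
    aux_convex_locallyConnected
      (convex_halfSpace_ge
        (⟨fun a b => rfl, fun c a => rfl⟩ :
          IsLinearMap ℝ fun x : EuclideanSpace ℝ (Fin n) => x 0) 0)
  haveI : LocallyConnectedSpace ↥L := ChartedSpace.locallyConnectedSpace (EuclideanHalfSpace n) ↥L
  set Kpre : Set ↥L := Subtype.val ⁻¹' frontier L with hKpre_def
  by_cases hall : ∀ y : ↥L, (connectedComponent y ∩ Kpre).Nonempty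
  · -- every component meets the (compact) frontier, so there are finitely many
    have hKcomp : IsCompact Kpre :=
      hLclosed.isClosedEmbedding_subtypeVal.isCompact_preimage hfr
    obtain ⟨t, -, hcover⟩ := hKcomp.elim_nhds_subcover (fun z => connectedComponent z)
      (fun z _ => isOpen_connectedComponent.mem_nhds mem_connectedComponent)
    refine Finite.of_surjective (fun x : t => (ConnectedComponents.mk x : ConnectedComponents ↥L))
      ?_
    intro c
    obtain ⟨y, rfl⟩ := ConnectedComponents.surjective_coe c
    obtain ⟨z, hzC, hzK⟩ := hall y
    obtain ⟨x, hxt, hzx⟩ := Set.mem_iUnion₂.mp (hcover hzK)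
    refine ⟨⟨x, hxt⟩, ?_⟩
    rw [ConnectedComponents.coe_eq_coe]
    show connectedComponent x = connectedComponent y
    have h1 : connectedComponent x = connectedComponent z := connectedComponent_eq hzx
    have h2 : connectedComponent y = connectedComponent z := connectedComponent_eq hzC
    exact h1.trans h2.symm
  · -- some component misses the frontier; then it is clopen in `M`, hence all of `M`,
    -- so `L` is connected.
    push_neg at hall
    obtain ⟨y, hy⟩ := hall
    set C : Set ↥L := connectedComponent y with hC_def
    set S : Set M := Subtype.val '' C with hS_def
    have hSL : S ⊆ L := by rintro _ ⟨z, -, rfl⟩; exact z.2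
    -- S misses the frontier, hence lands in the interior
    have hSint : S ⊆ interior L := by
      rintro _ ⟨z, hz, rfl⟩
      have hznot : (z : M) ∉ frontier L := by
        intro hmem
        exact absurd (Set.eq_empty_iff_forall_notMem.mp hy z ⟨hz, hmem⟩) not_false
      have : (z : M) ∈ L \ frontier L := ⟨z.2, hznot⟩
      rwa [hLclosed.frontier_eq, Set.diff_diff_cancel_left interior_subset] at this
    -- S is open in M
    have hSopen : IsOpen S := by
      obtain ⟨U, hUopen, hUeq⟩ := isOpen_induced_iff.mp (isOpen_connectedComponent (x := y))
      have himg : S = U ∩ L := by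
        rw [hS_def, hC_def, ← hUeq, Subtype.image_preimage_coe, Set.inter_comm]
      have : S = U ∩ interior L := by
        apply Set.Subset.antisymm
        · exact Set.subset_inter (himg ▸ Set.inter_subset_left) hSint
        · rw [himg]; exact Set.inter_subset_inter_right U interior_subset
      rw [this]
      exact hUopen.inter isOpen_interior
    -- S is closed in M
    have hSclosed : IsClosed S :=
      hLclosed.isClosedEmbedding_subtypeVal.isClosedMap _ isClosed_connectedComponent
    have hSne : S.Nonempty := ⟨y, y, mem_connectedComponent, rfl⟩
    have hSuniv : S = Set.univ := IsClopen.eq_univ ⟨hSclosed, hSopen⟩ hSne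
    -- hence C = univ and L is preconnected
    have hCuniv : C = Set.univ := by
      apply Set.eq_univ_of_forall
      intro z
      have : (z : M) ∈ S := hSuniv ▸ Set.mem_univ _
      obtain ⟨w, hw, hwz⟩ := this
      rwa [← Subtype.coe_injective hwz]
    haveI : PreconnectedSpace ↥L :=
      ⟨hCuniv ▸ isPreconnected_connectedComponent⟩
    haveI : Subsingleton (ConnectedComponents ↥L) := by
      constructor
      intro a b
      obtain ⟨a, rfl⟩ := ConnectedComponents.surjective_coe a
      obtain ⟨b, rfl⟩ := ConnectedComponents.surjective_coe b
      rw [ConnectedComponents.coe_eq_coe, PreconnectedSpace.connectedComponent_eq_univ,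
        PreconnectedSpace.connectedComponent_eq_univ]
    exact Finite.of_subsingleton
end

section
/- Let G be a topological group acting on a manifold M, F a subgroup of G, and (H,F) a pair with H ⊆ G. Suppose triples (V₁,U₁,C₁) and (V₂,U₂,C₂) of subsets of M (with C_i ⊆ U_i ∩ V_i) both have the weak extension property for (H,F), and V₁ ∩ V₂ = ∅. Then the triple (V₁ ∪ V₂, U₁ ∪ U₂, C₁ ∪ C₂) also has the weak extension property for (H,F). -/
/-! Restriction to `U₁` and to `U₂` is continuous, so `f ↦ s¹_t(f|_{U₁}) · s²_t(f|_{U₂})` is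
defined on a neighborhood of the inclusion. Since each factor fixes everything outside its
support and hence preserves its support, the disjointness of `V₁` and `V₂` means that on `Cᵢ`
only the `i`-th factor acts. -/

open unitInterval Topology

section

variable {G M : Type*} [Group G] [TopologicalSpace G] [IsTopologicalGroup G]
  [TopologicalSpace M] [MulAction G M] [ContinuousSMul G M]

/-- The inclusion map `U ⊆ M` as a continuous map. -/
def inclMap (U : Set M) : C(↥U, M) := ⟨fun x => (x : M), continuous_subtype_val⟩

/-- The set `ℰ^H(U, M)` of restrictions to `U` of homeomorphisms induced by
elements of `H`, inside `C(U, M)` with the compact-open topology. -/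
def EHset (H : Set G) (U : Set M) : Set C(↥U, M) :=
  {f | ∃ h ∈ H, ∀ x : ↥U, f x = h • (x : M)}

/-- The triple `(V, U, C)` has the weak extension property for `(H, F)`: there is a
neighborhood `𝒰` of the inclusion `i_U` in `ℰ^H(U, M)` and a homotopy
`s : 𝒰 × [0,1] → F(V)` with `s₀(f) = e`, `s₁(f)` agreeing with `f` on `C`, and
`s_t(i_U) = e`. -/
def WEP (H : Set G) (F : Subgroup G) (V U C : Set M) (hCU : C ⊆ U) : Prop :=
  ∃ 𝒰 ∈ 𝓝[EHset H U] (inclMap U), ∃ s : ↥𝒰 × I → G,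
    Continuous s ∧
    (∀ (f : ↥𝒰) (t : I), s (f, t) ∈ F) ∧
    (∀ (f : ↥𝒰) (t : I), ∀ y ∉ V, s (f, t) • y = y) ∧
    (∀ f : ↥𝒰, s (f, 0) = 1) ∧
    (∀ (f : ↥𝒰) (x : M) (hx : x ∈ C), s (f, 1) • x = (f : C(↥U, M)) ⟨x, hCU hx⟩) ∧
    (∀ (f : ↥𝒰) (t : I), (f : C(↥U, M)) = inclMap U → s (f, t) = 1)

section Support

variable {α β : Type*} [Group α] [MulAction α β] {g g₁ g₂ : α} {V V₁ V₂ : Set β} {x : β}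

theorem smul_mem_of_forall_notMem_smul_eq (hg : ∀ y ∉ V, g • y = y) (hx : x ∈ V) :
    g • x ∈ V := by
  by_contra hgx
  exact hgx (by rwa [smul_left_cancel g (hg (g • x) hgx)])

theorem mul_smul_eq_left_of_disjoint (hg₂ : ∀ y ∉ V₂, g₂ • y = y) (hdisj : Disjoint V₁ V₂)
    (hx : x ∈ V₁) : (g₁ * g₂) • x = g₁ • x := by
  rw [mul_smul, hg₂ x (hdisj.notMem_of_mem_left hx)]

theorem mul_smul_eq_right_of_disjoint (hg₁ : ∀ y ∉ V₁, g₁ • y = y)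
    (hg₂ : ∀ y ∉ V₂, g₂ • y = y) (hdisj : Disjoint V₁ V₂) (hx : x ∈ V₂) :
    (g₁ * g₂) • x = g₂ • x := by
  rw [mul_smul, hg₁ _ (hdisj.notMem_of_mem_right (smul_mem_of_forall_notMem_smul_eq hg₂ hx))]

end Support

def restrictOfSubset {U U' : Set M} (h : U ⊆ U') : C(C(↥U', M), C(↥U, M)) :=
  (ContinuousMap.inclusion h).compRightContinuousMap M

omit [TopologicalSpace G] [IsTopologicalGroup G] [ContinuousSMul G M] in
theorem tendsto_restrictOfSubset_nhdsWithin_EHset (H : Set G) {U U' : Set M} (h : U ⊆ U') :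
    Filter.Tendsto (restrictOfSubset h) (𝓝[EHset H U'] (inclMap U'))
      (𝓝[EHset H U] (inclMap U)) := by
  have hmaps : Set.MapsTo (restrictOfSubset h) (EHset H U') (EHset H U) := by
    rintro f ⟨g, hg, hf⟩
    exact ⟨g, hg, fun x => hf (Set.inclusion h x)⟩
  exact (restrictOfSubset h).continuous.continuousWithinAt.tendsto_nhdsWithin hmaps

theorem restrictOfSubset_inclMap {U U' : Set M} (h : U ⊆ U') :
    restrictOfSubset h (inclMap U') = inclMap U :=
  rfl

/-- If two triples with disjoint supports `V₁ ∩ V₂ = ∅` both have the weak extension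
property for `(H, F)` with `F` a subgroup, then so does their union. -/
theorem WEP_union_of_disjoint
    (H : Set G) (F : Subgroup G)
    (V₁ U₁ C₁ V₂ U₂ C₂ : Set M)
    (hCU₁ : C₁ ⊆ U₁) (hCV₁ : C₁ ⊆ V₁) (hCU₂ : C₂ ⊆ U₂) (hCV₂ : C₂ ⊆ V₂)
    (hdisj : Disjoint V₁ V₂)
    (w₁ : WEP H F V₁ U₁ C₁ hCU₁) (w₂ : WEP H F V₂ U₂ C₂ hCU₂) :
    WEP H F (V₁ ∪ V₂) (U₁ ∪ U₂) (C₁ ∪ C₂) (Set.union_subset_union hCU₁ hCU₂) := by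
  obtain ⟨𝒰₁, h𝒰₁, s₁, hc₁, hF₁, hV₁, h0₁, h1₁, hi₁⟩ := w₁
  obtain ⟨𝒰₂, h𝒰₂, s₂, hc₂, hF₂, hV₂, h0₂, h1₂, hi₂⟩ := w₂
  set r₁ := restrictOfSubset (M := M) (Set.subset_union_left (t := U₂))
  set r₂ := restrictOfSubset (M := M) (Set.subset_union_right (s := U₁))
  set 𝒰 := r₁ ⁻¹' 𝒰₁ ∩ r₂ ⁻¹' 𝒰₂
  have hp₁ : Set.MapsTo r₁ 𝒰 𝒰₁ := fun _ hf => hf.1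
  have hp₂ : Set.MapsTo r₂ 𝒰 𝒰₂ := fun _ hf => hf.2
  set p₁ := hp₁.restrict r₁ 𝒰 𝒰₁
  set p₂ := hp₂.restrict r₂ 𝒰 𝒰₂
  have h𝒰 : 𝒰 ∈ 𝓝[EHset H (U₁ ∪ U₂)] (inclMap (U₁ ∪ U₂)) :=
    Filter.inter_mem (tendsto_restrictOfSubset_nhdsWithin_EHset H Set.subset_union_left h𝒰₁)
      (tendsto_restrictOfSubset_nhdsWithin_EHset H Set.subset_union_right h𝒰₂)
  refine ⟨𝒰, h𝒰, fun q => s₁ (p₁ q.1, q.2) * s₂ (p₂ q.1, q.2), ?_, ?_, ?_, ?_, ?_, ?_⟩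
  · have hpc₁ : Continuous p₁ := r₁.continuous.restrict hp₁
    have hpc₂ : Continuous p₂ := r₂.continuous.restrict hp₂
    fun_prop
  · exact fun f t => mul_mem (hF₁ _ _) (hF₂ _ _)
  · intro f t y hy
    rw [mul_smul, hV₂ _ _ y fun h => hy (Or.inr h), hV₁ _ _ y fun h => hy (Or.inl h)]
  · intro f
    simp only [h0₁, h0₂, mul_one]
  · rintro f x (hx | hx)
    · exact (mul_smul_eq_left_of_disjoint (hV₂ _ _) hdisj (hCV₁ hx)).trans (h1₁ (p₁ f) x hx)
    · exact (mul_smul_eq_right_of_disjoint (hV₁ _ _) (hV₂ _ _) hdisj (hCV₂ hx)).trans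
        (h1₂ (p₂ f) x hx)
  · intro f t hf
    have e₁ : (p₁ f : C(↥U₁, M)) = inclMap U₁ :=
      (congrArg r₁ hf).trans (restrictOfSubset_inclMap _)
    have e₂ : (p₂ f : C(↥U₂, M)) = inclMap U₂ :=
      (congrArg r₂ hf).trans (restrictOfSubset_inclMap _)
    simp only [hi₁ _ t e₁, hi₂ _ t e₂, mul_one]

end
end

section
/- Let Y be a connected, locally connected, locally compact separable metrizable space and μ a Radon measure on Y. The map c^μ : ker-domain → 𝒮(Y,μ) assigning to each μ-preserving end-fixing homeomorphism h its end charge c^μ_h is a group homomorphism: c^μ_{gh} = c^μ_g + c^μ_h for all μ-preserving homeomorphisms g, h of Y fixing the ends. -/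
open MeasureTheory

lemma diff_toReal_eq {Y : Type*} [MeasurableSpace Y] (μ : Measure Y)
    {S A B : Set Y} (hA : MeasurableSet A) (hB : MeasurableSet B)
    (hS : MeasurableSet S) (hμS : μ S ≠ ⊤)
    (h1 : A \ B ⊆ S) (h2 : B \ A ⊆ S) :
    (μ (A \ B)).toReal - (μ (B \ A)).toReal
      = (μ (A ∩ S)).toReal - (μ (B ∩ S)).toReal := by
  have e1 : A ∩ S = (A \ B) ∪ (A ∩ B ∩ S) := by
    ext x; constructor
    · rintro ⟨hxA, hxS⟩
      by_cases hxB : x ∈ B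
      · exact Or.inr ⟨⟨hxA, hxB⟩, hxS⟩
      · exact Or.inl ⟨hxA, hxB⟩
    · rintro (⟨hxA, hxB⟩ | ⟨⟨hxA, _⟩, hxS⟩)
      · exact ⟨hxA, h1 ⟨hxA, hxB⟩⟩
      · exact ⟨hxA, hxS⟩
  have e2 : B ∩ S = (B \ A) ∪ (A ∩ B ∩ S) := by
    ext x; constructor
    · rintro ⟨hxB, hxS⟩
      by_cases hxA : x ∈ A
      · exact Or.inr ⟨⟨hxA, hxB⟩, hxS⟩
      · exact Or.inl ⟨hxB, hxA⟩
    · rintro (⟨hxB, hxA⟩ | ⟨⟨_, hxB⟩, hxS⟩)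
      · exact ⟨hxB, h2 ⟨hxB, hxA⟩⟩
      · exact ⟨hxB, hxS⟩
  have d1 : Disjoint (A \ B) (A ∩ B ∩ S) := by
    rw [Set.disjoint_left]; rintro x ⟨_, hxB⟩ ⟨⟨_, hxB'⟩, _⟩; exact hxB hxB'
  have d2 : Disjoint (B \ A) (A ∩ B ∩ S) := by
    rw [Set.disjoint_left]; rintro x ⟨_, hxA⟩ ⟨⟨hxA', _⟩, _⟩; exact hxA hxA'
  have m1 : μ (A ∩ S) = μ (A \ B) + μ (A ∩ B ∩ S) := by
    rw [e1, measure_union d1 ((hA.inter hB).inter hS)]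
  have m2 : μ (B ∩ S) = μ (B \ A) + μ (A ∩ B ∩ S) := by
    rw [e2, measure_union d2 ((hA.inter hB).inter hS)]
  have f1 : μ (A \ B) ≠ ⊤ := ((measure_mono h1).trans_lt hμS.lt_top).ne
  have f2 : μ (B \ A) ≠ ⊤ := ((measure_mono h2).trans_lt hμS.lt_top).ne
  have f3 : μ (A ∩ B ∩ S) ≠ ⊤ :=
    ((measure_mono (Set.inter_subset_right)).trans_lt hμS.lt_top).ne
  rw [m1, m2, ENNReal.toReal_add f1 f3, ENNReal.toReal_add f2 f3]
  ring

/-- The end charge homomorphism is additive: for `μ`-preserving, end-fixing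
homeomorphisms `g` and `h` of `Y` and every Borel set `C` with compact frontier,
the end-charge value of `g ∘ h` at `E_C` equals the sum of those of `g` and `h`. -/
theorem end_charge_homomorphism
    {Y : Type*} [TopologicalSpace Y] [MeasurableSpace Y] [BorelSpace Y]
    [ConnectedSpace Y] [LocallyConnectedSpace Y] [LocallyCompactSpace Y]
    [TopologicalSpace.SeparableSpace Y] [TopologicalSpace.MetrizableSpace Y]
    [NoncompactSpace Y]
    (μ : Measure Y) [IsFiniteMeasureOnCompacts μ]
    (g h : Y ≃ₜ Y)
    (hgpres : Measure.map g μ = μ) (hhpres : Measure.map h μ = μ)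
    (hgend : ∀ C : Set Y, MeasurableSet C → IsCompact (frontier C) →
      IsCompact (closure (symmDiff C (g '' C))))
    (hhend : ∀ C : Set Y, MeasurableSet C → IsCompact (frontier C) →
      IsCompact (closure (symmDiff C (h '' C))))
    (C : Set Y) (hC : MeasurableSet C) (hfrC : IsCompact (frontier C)) :
    (μ (C \ (fun y => g (h y)) '' C)).toReal - (μ ((fun y => g (h y)) '' C \ C)).toReal
      = ((μ (C \ g '' C)).toReal - (μ (g '' C \ C)).toReal)
        + ((μ (C \ h '' C)).toReal - (μ (h '' C \ C)).toReal) := by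
  letI := TopologicalSpace.metrizableSpaceMetric Y
  -- measurability of images
  have gmeas : ∀ {X : Set Y}, MeasurableSet X → MeasurableSet (g '' X) := by
    intro X hX
    exact (Homeomorph.toMeasurableEquiv g).measurableSet_image.2 hX
  have hmeas : ∀ {X : Set Y}, MeasurableSet X → MeasurableSet (h '' X) := by
    intro X hX
    exact (Homeomorph.toMeasurableEquiv h).measurableSet_image.2 hX
  -- invariance of μ under g
  have ginv : ∀ {X : Set Y}, MeasurableSet X → μ (g '' X) = μ X := by
    intro X hX
    conv_lhs => rw [← hgpres]
    rw [Measure.map_apply g.continuous.measurable (gmeas hX),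
      Set.preimage_image_eq _ g.injective]
  set D := g '' C with hD
  set E := g '' (h '' C) with hE
  have hEeq : (fun y => g (h y)) '' C = E := by
    rw [hE, Set.image_image]
  rw [hEeq]
  have hDm : MeasurableSet D := gmeas hC
  have hHCm : MeasurableSet (h '' C) := hmeas hC
  have hEm : MeasurableSet E := gmeas hHCm
  -- the big compact set S
  have k1 : IsCompact (closure (symmDiff C (g '' C))) := hgend C hC hfrC
  have k2 : IsCompact (closure (symmDiff C (h '' C))) := hhend C hC hfrC
  have k3 : IsCompact (g '' closure (symmDiff C (h '' C))) :=
    k2.image g.continuous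
  set S : Set Y := closure (symmDiff C (g '' C)) ∪ g '' closure (symmDiff C (h '' C))
    ∪ closure (symmDiff C (h '' C)) with hSdef
  have hSc : IsCompact S := (k1.union k3).union k2
  have hSm : MeasurableSet S := hSc.isClosed.measurableSet
  have hμS : μ S ≠ ⊤ := hSc.measure_lt_top.ne
  -- subset facts
  have sub1 : C \ D ⊆ S := fun x hx =>
    Or.inl (Or.inl (subset_closure (Or.inl hx)))
  have sub2 : D \ C ⊆ S := fun x hx =>
    Or.inl (Or.inl (subset_closure (Or.inr hx)))
  have subh1 : C \ h '' C ⊆ S := fun x hx =>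
    Or.inr (subset_closure (Or.inl hx))
  have subh2 : h '' C \ C ⊆ S := fun x hx =>
    Or.inr (subset_closure (Or.inr hx))
  have imdiff1 : D \ E = g '' (C \ h '' C) := by
    rw [hD, hE, Set.image_diff g.injective]
  have imdiff2 : E \ D = g '' (h '' C \ C) := by
    rw [hD, hE, Set.image_diff g.injective]
  have sub3 : D \ E ⊆ S := by
    rw [imdiff1]
    intro x ⟨y, hy, hxy⟩
    exact Or.inl (Or.inr ⟨y, subset_closure (Or.inl hy), hxy⟩)
  have sub4 : E \ D ⊆ S := by
    rw [imdiff2]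
    intro x ⟨y, hy, hxy⟩
    exact Or.inl (Or.inr ⟨y, subset_closure (Or.inr hy), hxy⟩)
  have sub5 : C \ E ⊆ S := by
    intro x ⟨hxC, hxE⟩
    by_cases hxD : x ∈ D
    · exact sub3 ⟨hxD, hxE⟩
    · exact sub1 ⟨hxC, hxD⟩
  have sub6 : E \ C ⊆ S := by
    intro x ⟨hxE, hxC⟩
    by_cases hxD : x ∈ D
    · exact sub2 ⟨hxD, hxC⟩
    · exact sub4 ⟨hxE, hxD⟩
  -- rewrite the h-term using g-invariance
  have invh1 : μ (C \ h '' C) = μ (D \ E) := by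
    rw [imdiff1, ginv (hC.diff hHCm)]
  have invh2 : μ (h '' C \ C) = μ (E \ D) := by
    rw [imdiff2, ginv (hHCm.diff hC)]
  rw [invh1, invh2,
    diff_toReal_eq μ hC hEm hSm hμS sub5 sub6,
    diff_toReal_eq μ hC hDm hSm hμS sub1 sub2,
    diff_toReal_eq μ hDm hEm hSm hμS sub3 sub4]
  ring
end
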